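/- Let C_t be a clairvoyant schedule that conforms with an oblivious schedule O_t. If packets i and j both occur in O_t, w_i < w_j, d_i < d_j, and i occurs in C_t, then j also occurs in C_t. -/

import Mathlib

/-- Packet `j` is pending at step `t`: released by `t` and not yet expired. -/
def Pending {P : Type*} (r d : P → ℕ) (t : ℕ) (j : P) : Prop :=
  r j ≤ t ∧ t < d j

/-- Packet `j` occurs in (is scheduled by) the schedule `S`. -/
def Occurs {P : Type*} (S : ℕ → Option P) (j : P) : Prop :=
  ∃ t', S t' = some j

/-- A feasible schedule starting at step `t` over the packet set `A`:
a partial map from steps `{t, t+1, …}` to `A`, injective on its domain,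
scheduling packets only while they are pending. -/
def FeasibleSchedule {P : Type*} (r d : P → ℕ) (t : ℕ) (A : Set P)
    (S : ℕ → Option P) : Prop :=
  (∀ t' < t, S t' = none) ∧
  (∀ t₁ t₂ j, S t₁ = some j → S t₂ = some j → t₁ = t₂) ∧
  (∀ t' j, S t' = some j → j ∈ A ∧ r j ≤ t' ∧ t' < d j)

open Classical in
/-- The weight of a schedule: total weight of the scheduled packets. -/
noncomputable def schedWeight {P : Type*} [Fintype P] (w : P → ℝ)
    (S : ℕ → Option P) : ℝ :=
  ∑ j : P, if Occurs S j then w j else 0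

/-- An optimal feasible schedule starting at `t` over `A`. -/
def OptimalSchedule {P : Type*} [Fintype P] (r d : P → ℕ) (w : P → ℝ) (t : ℕ)
    (A : Set P) (S : ℕ → Option P) : Prop :=
  FeasibleSchedule r d t A S ∧
  ∀ S', FeasibleSchedule r d t A S' → schedWeight w S' ≤ schedWeight w S

/-- Compatibility of the linear order `⊴` (here `le`) with deadlines,
weights and release times. -/
def OrderCompatible {P : Type*} (r d : P → ℕ) (w : P → ℝ)
    (le : P → P → Prop) : Prop :=
  (∀ i j, d i < d j → le i j) ∧
  (∀ i j, d i = d j → w j < w i → le i j) ∧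
  (∀ i j, d i = d j → w i = w j → r i < r j → le i j)

/-- `S` is a `⊴`-schedule over `A`: whenever `S` schedules a packet, that packet is
the `⊴`-minimum of the packets of `A` pending at that step and not scheduled earlier. -/
def TriSchedule {P : Type*} (r d : P → ℕ) (le : P → P → Prop) (A : Set P)
    (S : ℕ → Option P) : Prop :=
  ∀ t' j, S t' = some j →
    ∀ k ∈ A, Pending r d t' k → (∀ u < t', S u ≠ some k) → le j k

/-- The set of packets pending at step `t`. -/
def PendingSet {P : Type*} (r d : P → ℕ) (t : ℕ) : Set P :=
  {j | Pending r d t j}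

/-- The packets pending at `t` together with all packets released after `t`. -/
def ClairSet {P : Type*} (r d : P → ℕ) (t : ℕ) : Set P :=
  {j | Pending r d t j ∨ t < r j}

/-- An oblivious schedule at step `t`: an optimal feasible `⊴`-schedule
starting at `t` over the packets pending at `t`. -/
def ObliviousSchedule {P : Type*} [Fintype P] (r d : P → ℕ) (w : P → ℝ)
    (le : P → P → Prop) (t : ℕ) (O : ℕ → Option P) : Prop :=
  OptimalSchedule r d w t (PendingSet r d t) O ∧
  TriSchedule r d le (PendingSet r d t) O

/-- A clairvoyant schedule at step `t`: an optimal feasible schedule starting at `t`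
over the packets pending at `t` together with all packets released after `t`. -/
def ClairvoyantSchedule {P : Type*} [Fintype P] (r d : P → ℕ) (w : P → ℝ)
    (t : ℕ) (C : ℕ → Option P) : Prop :=
  OptimalSchedule r d w t (ClairSet r d t) C

/-- A clairvoyant schedule `C` conforms with an oblivious schedule `O` at step `t`. -/
def Conforms {P : Type*} (r d : P → ℕ) (w : P → ℝ) (le : P → P → Prop)
    (t : ℕ) (O C : ℕ → Option P) : Prop :=
  TriSchedule r d le (ClairSet r d t) C ∧
  (∀ j, Occurs C j → r j ≤ t → Occurs O j) ∧
  (∀ jt, C t = some jt → ∀ i, Occurs O i → le i jt → i ≠ jt → w i < w jt)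

/-
The exchange argument: if `C` schedules `i` at step `s` but never schedules `j`, then `j` is
pending at `t ≤ s` (it occurs in `O`) and `s < d i < d j`, so putting `j` in place of `i` at
step `s` gives a feasible clairvoyant schedule heavier by `w j - w i > 0`, contradicting the
optimality of `C`.
-/

section Exchange

variable {P : Type*} {r d : P → ℕ} {t s : ℕ} {A : Set P} {S : ℕ → Option P} {i j : P}

theorem FeasibleSchedule.le_of_eq_some (hS : FeasibleSchedule r d t A S) (hs : S s = some i) :
    t ≤ s := by
  by_contra! h
  simp [hS.1 s h] at hs

theorem occurs_update_iff (hinj : ∀ t₁ t₂ k, S t₁ = some k → S t₂ = some k → t₁ = t₂)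
    (hs : S s = some i) (k : P) :
    Occurs (Function.update S s (some j)) k ↔ k = j ∨ (Occurs S k ∧ k ≠ i) := by
  constructor
  · rintro ⟨u, hu⟩
    by_cases hus : u = s
    · subst hus
      simp only [Function.update_self, Option.some.injEq] at hu
      exact Or.inl hu.symm
    · rw [Function.update_of_ne hus] at hu
      exact Or.inr ⟨⟨u, hu⟩, fun hki => hus (hinj u s k hu (hki ▸ hs))⟩
  · rintro (rfl | ⟨⟨u, hu⟩, hki⟩)
    · exact ⟨s, Function.update_self ..⟩
    · have hus : u ≠ s := by
        rintro rfl
        exact hki (Option.some_injective _ (hu.symm.trans hs))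
      exact ⟨u, by rwa [Function.update_of_ne hus]⟩

theorem FeasibleSchedule.update (hS : FeasibleSchedule r d t A S) (hts : t ≤ s)
    (hjA : j ∈ A) (hrj : r j ≤ s) (hdj : s < d j) (hjS : ¬ Occurs S j) :
    FeasibleSchedule r d t A (Function.update S s (some j)) := by
  obtain ⟨hnone, hinj, hval⟩ := hS
  refine ⟨fun u hu => ?_, fun t₁ t₂ k h₁ h₂ => ?_, fun u k hu => ?_⟩
  · rw [Function.update_of_ne (by omega)]
    exact hnone u hu
  · by_cases e₁ : t₁ = s <;> by_cases e₂ : t₂ = s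
    · rw [e₁, e₂]
    · subst e₁
      rw [Function.update_self, Option.some.injEq] at h₁
      rw [Function.update_of_ne e₂, ← h₁] at h₂
      exact absurd ⟨t₂, h₂⟩ hjS
    · subst e₂
      rw [Function.update_self, Option.some.injEq] at h₂
      rw [Function.update_of_ne e₁, ← h₂] at h₁
      exact absurd ⟨t₁, h₁⟩ hjS
    · rw [Function.update_of_ne e₁] at h₁
      rw [Function.update_of_ne e₂] at h₂
      exact hinj t₁ t₂ k h₁ h₂
  · by_cases e : u = s
    · subst e
      rw [Function.update_self, Option.some.injEq] at hu
      exact hu ▸ ⟨hjA, hrj, hdj⟩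
    · rw [Function.update_of_ne e] at hu
      exact hval u k hu

theorem schedWeight_update [Fintype P] (w : P → ℝ) (hS : FeasibleSchedule r d t A S)
    (hs : S s = some i) (hjS : ¬ Occurs S j) :
    schedWeight w (Function.update S s (some j)) = schedWeight w S + w j - w i := by
  classical
  have hij : i ≠ j := by
    rintro rfl
    exact hjS ⟨s, hs⟩
  have hterm : ∀ k, (if Occurs (Function.update S s (some j)) k then w k else 0) =
      (if Occurs S k then w k else 0) + (if k = j then w k else 0) -
        (if k = i then w k else 0) := by
    intro k
    rw [occurs_update_iff hS.2.1 hs]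
    by_cases hkj : k = j
    · subst hkj
      simp [hjS, hij.symm]
    · by_cases hki : k = i
      · subst hki
        have hSk : Occurs S k := ⟨s, hs⟩
        simp [hkj, hSk]
      · simp [hkj, hki]
  simp only [schedWeight, hterm, Finset.sum_sub_distrib, Finset.sum_add_distrib,
    Finset.sum_ite_eq', Finset.mem_univ, if_true]

theorem OptimalSchedule.weight_le_of_exchange [Fintype P] {w : P → ℝ}
    (hS : OptimalSchedule r d w t A S) (hs : S s = some i) (hjA : j ∈ A) (hrj : r j ≤ s)
    (hdj : s < d j) (hjS : ¬ Occurs S j) : w j ≤ w i := by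
  have hle := hS.2 _ (hS.1.update (hS.1.le_of_eq_some hs) hjA hrj hdj hjS)
  rw [schedWeight_update w hS.1 hs hjS] at hle
  linarith

end Exchange

theorem stmt_3_general {P : Type*} [Fintype P] (r d : P → ℕ) (w : P → ℝ)
    (le : P → P → Prop)
    (t : ℕ) (O C : ℕ → Option P)
    (hO : ObliviousSchedule r d w le t O)
    (hC : ClairvoyantSchedule r d w t C)
    (i j : P) (hjO : Occurs O j)
    (hwij : w i < w j) (hdij : d i < d j) (hiC : Occurs C i) :
    Occurs C j := by
  by_contra hjC
  obtain ⟨s, hs⟩ := hiC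
  obtain ⟨u, hu⟩ := hjO
  have hj : Pending r d t j := (hO.1.1.2.2 u j hu).1
  have hts : t ≤ s := hC.1.le_of_eq_some hs
  have hsi : s < d i := (hC.1.2.2 s i hs).2.2
  have hwji : w j ≤ w i :=
    hC.weight_le_of_exchange hs (Or.inl hj) (hj.1.trans hts) (hsi.trans hdij) hjC
  linarith

/-- If `C` is a clairvoyant schedule conforming with an oblivious
schedule `O`, packets `i, j` both occur in `O`, `w i < w j`, `d i < d j`, and
`i` occurs in `C`, then `j` occurs in `C`. -/
theorem stmt_3 {P : Type*} [Fintype P] (r d : P → ℕ) (w : P → ℝ)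
    (le : P → P → Prop)
    (hrd : ∀ j, r j < d j) (hw : ∀ j, 0 < w j)
    (hlin : IsLinearOrder P le) (hcomp : OrderCompatible r d w le)
    (t : ℕ) (O C : ℕ → Option P)
    (hO : ObliviousSchedule r d w le t O)
    (hC : ClairvoyantSchedule r d w t C)
    (hconf : Conforms r d w le t O C)
    (i j : P) (hiO : Occurs O i) (hjO : Occurs O j)
    (hwij : w i < w j) (hdij : d i < d j) (hiC : Occurs C i) :
    Occurs C j :=
  stmt_3_general r d w le t O C hO hC i j hjO hwij hdij hiC
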